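/- Let X be a bead-set for a partition λ that is normalized with respect to s, and let q be the least integer with X ⊆ {0,1,…,qs−1}. If the s-abacus of X exhibits both horizontal anti-symmetry and vertical symmetry, then λ is self-conjugate. -/
import Mathlib


/-- A partition: a weakly decreasing sequence of natural numbers (indexed from 0)
that is eventually zero.  `parts i` is the (i+1)-st largest part (0 if `i` exceeds
the number of parts). -/
structure NPartition where
  parts : ℕ → ℕ
  antitone : ∀ ⦃i j : ℕ⦄, i ≤ j → parts j ≤ parts i
  eventually_zero : ∃ N, ∀ i, N ≤ i → parts i = 0

namespace NPartition

/-- The size of a partition: the sum of its parts. -/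
noncomputable def size (lam : NPartition) : ℕ := ∑ᶠ i, lam.parts i

/-- The number of (positive) parts of a partition. -/
noncomputable def numParts (lam : NPartition) : ℕ := sInf {N | lam.parts N = 0}

/-- The conjugate partition: `conj.parts j` is the number of rows whose part exceeds `j`,
i.e. the length of column `j` of the Young diagram. -/
noncomputable def conj (lam : NPartition) : NPartition where
  parts := fun j => ((Finset.range lam.numParts).filter (fun i => j < lam.parts i)).card
  antitone := by
    intro a b hab
    apply Finset.card_le_card
    intro x hx
    simp only [Finset.mem_filter] at hx ⊢
    exact ⟨hx.1, lt_of_le_of_lt hab hx.2⟩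
  eventually_zero := by
    refine ⟨lam.parts 0, fun j hj => ?_⟩
    simp only [Finset.card_eq_zero, Finset.filter_eq_empty_iff]
    intro i _
    exact not_lt.mpr (le_trans (lam.antitone (Nat.zero_le i)) hj)

/-- The hook length of the box in row `i`, column `j` (both 0-indexed) of the Young
diagram: arm + leg + 1. -/
noncomputable def hookLength (lam : NPartition) (i j : ℕ) : ℕ :=
  (lam.parts i - (j + 1)) + (lam.conj.parts j - (i + 1)) + 1

/-- `lam` is an `s`-core: no box of its Young diagram has hook length `s`. -/
noncomputable def IsCore (s : ℕ) (lam : NPartition) : Prop :=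
  ∀ i j, j < lam.parts i → lam.hookLength i j ≠ s

/-- The empty partition. -/
def emptyP : NPartition := ⟨fun _ => 0, fun _ _ _ => le_rfl, ⟨0, fun _ _ => rfl⟩⟩

/-- The parts of the partition obtained from `lam` by removing the (rim) hook with
corner box `(i, j)` (0-indexed). -/
noncomputable def removeHookParts (lam : NPartition) (i j : ℕ) : ℕ → ℕ := fun r =>
  if r < i then lam.parts r
  else if r + 1 < lam.conj.parts j then lam.parts (r + 1) - 1
  else if r + 1 = lam.conj.parts j then j
  else lam.parts r

/-- `mu` is obtained from `lam` by removing a single hook of length `s`. -/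
noncomputable def RemoveHookStep (s : ℕ) (lam mu : NPartition) : Prop :=
  ∃ i j, j < lam.parts i ∧ lam.hookLength i j = s ∧
    ∀ r, mu.parts r = lam.removeHookParts i j r

/-- `core` is the `s`-core of `lam`: it is obtained from `lam` by repeatedly removing
hooks of length `s`, and no hook of length `s` remains. -/
noncomputable def HasSCore (s : ℕ) (lam core : NPartition) : Prop :=
  Relation.ReflTransGen (RemoveHookStep s) lam core ∧ IsCore s core

/-- The bead-set of `lam` with shift `k`: the set `{0, …, k-1} ∪ {h + k : h a
first-column hook length of `lam`}`.  (The first-column hook length of row `i`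
(0-indexed) is `parts i + (m - (i+1))` where `m` is the number of parts.) -/
noncomputable def beadSet (lam : NPartition) (k : ℕ) : Finset ℕ :=
  Finset.range k ∪ (Finset.range lam.numParts).image
    (fun i => lam.parts i + (lam.numParts - (i + 1)) + k)

/-- `X` is a bead-set for `lam`. -/
noncomputable def IsBeadSet (lam : NPartition) (X : Finset ℕ) : Prop :=
  ∃ k, X = lam.beadSet k

/-- The minimal bead-set of `lam` (shift `k = 0`), i.e. its set of first-column
hook lengths. -/
noncomputable def minBeadSet (lam : NPartition) : Finset ℕ := lam.beadSet 0

/-- `X` is the bead-set of `lam` normalized with respect to `s`: the size of `X`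
is divisible by `s`, with the least possible shift `k`. -/
noncomputable def IsNormalizedBeadSet (s : ℕ) (lam : NPartition) (X : Finset ℕ) : Prop :=
  ∃ k, X = lam.beadSet k ∧ (lam.beadSet k).card % s = 0 ∧
    ∀ k' < k, (lam.beadSet k').card % s ≠ 0

end NPartition

/-- Runner `i` of the `s`-abacus of the bead-set `X`:  `X_i = {j : i + j·s ∈ X}`. -/
def runner (s i : ℕ) (X : Finset ℕ) : Finset ℕ :=
  (Finset.range (X.sup id + 1)).filter (fun j => i + j * s ∈ X)

/-- The staircase partition `τ_ℓ = (ℓ, ℓ-1, …, 1)`. -/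
def staircase (l : ℕ) : NPartition :=
  ⟨fun i => l - i, fun _ _ hij => Nat.sub_le_sub_left hij l,
   ⟨l, fun i hi => Nat.sub_eq_zero_of_le hi⟩⟩

/-- `P_{s,t}`: the set of positive integers not expressible as a nonnegative integer
combination of `s` and `t`. -/
def Pst (s t : ℕ) : Set ℕ := {n | 0 < n ∧ ¬ ∃ a b : ℕ, n = a * s + b * t}


namespace NPartition

lemma ext' {a b : NPartition} (h : ∀ i, a.parts i = b.parts i) : a = b := by
  obtain ⟨pa, ha1, ha2⟩ := a; obtain ⟨pb, hb1, hb2⟩ := b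
  have : pa = pb := funext h
  subst this
  rfl

lemma parts_numParts (lam : NPartition) : lam.parts lam.numParts = 0 := by
  obtain ⟨N, hN⟩ := lam.eventually_zero
  have hne : {N' | lam.parts N' = 0}.Nonempty := ⟨N, hN N le_rfl⟩
  have : lam.numParts ∈ {N' | lam.parts N' = 0} := Nat.sInf_mem hne
  exact this

lemma parts_eq_zero_iff (lam : NPartition) (i : ℕ) :
    lam.parts i = 0 ↔ lam.numParts ≤ i := by
  constructor
  · intro h; exact Nat.sInf_le h
  · intro h; exact Nat.le_zero.mp (le_trans (lam.antitone h) (le_of_eq lam.parts_numParts))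

lemma conj_parts_def (lam : NPartition) (j : ℕ) :
    lam.conj.parts j = ((Finset.range lam.numParts).filter (fun i => j < lam.parts i)).card := rfl

lemma conj_parts_le (lam : NPartition) (j : ℕ) : lam.conj.parts j ≤ lam.numParts := by
  rw [conj_parts_def]
  exact le_trans (Finset.card_filter_le _ _) (le_of_eq (Finset.card_range _))

lemma conj_lt_iff (lam : NPartition) (i j : ℕ) :
    i < lam.conj.parts j ↔ j < lam.parts i := by
  rw [conj_parts_def]
  constructor
  · intro h
    by_contra hc
    push_neg at hc
    have hsub : (Finset.range lam.numParts).filter (fun r => j < lam.parts r) ⊆ Finset.range i := by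
      intro x hx
      simp only [Finset.mem_filter, Finset.mem_range] at hx ⊢
      by_contra hxi
      push_neg at hxi
      exact absurd (lt_of_le_of_lt hc hx.2) (not_lt.mpr (lam.antitone hxi))
    have := Finset.card_le_card hsub
    simp only [Finset.card_range] at this
    omega
  · intro h
    have hsub : Finset.range (i + 1) ⊆
        (Finset.range lam.numParts).filter (fun r => j < lam.parts r) := by
      intro x hx
      simp only [Finset.mem_range] at hx
      have hx' : j < lam.parts x := lt_of_lt_of_le h (lam.antitone (by omega))
      simp only [Finset.mem_filter, Finset.mem_range]
      refine ⟨?_, hx'⟩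
      by_contra hxm
      push_neg at hxm
      have := (lam.parts_eq_zero_iff x).mpr hxm
      omega
    have := Finset.card_le_card hsub
    simp only [Finset.card_range] at this
    omega

lemma numParts_conj_le (lam : NPartition) : lam.conj.numParts ≤ lam.parts 0 := by
  rw [← parts_eq_zero_iff]
  rw [conj_parts_def, Finset.card_eq_zero, Finset.filter_eq_empty_iff]
  intro i _
  exact not_lt.mpr (lam.antitone (Nat.zero_le i))

noncomputable def betaF (lam : NPartition) (N i : ℕ) : ℕ := lam.parts i + (N - 1 - i)

noncomputable def betaSet (lam : NPartition) (N : ℕ) : Finset ℕ :=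
  (Finset.range N).image (lam.betaF N)

lemma betaF_le (lam : NPartition) {N i j : ℕ} (h : i ≤ j) :
    lam.betaF N j ≤ lam.betaF N i := by
  have := lam.antitone h
  unfold betaF
  omega

lemma betaF_lt (lam : NPartition) {N i j : ℕ} (h1 : i < j) (h2 : j < N) :
    lam.betaF N j < lam.betaF N i := by
  have := lam.antitone h1.le
  unfold betaF
  omega

lemma betaF_injOn (lam : NPartition) (N : ℕ) :
    Set.InjOn (lam.betaF N) (Finset.range N) := by
  intro a ha b hb hab
  simp only [Finset.coe_range, Set.mem_Iio] at ha hb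
  by_contra hne
  rcases Nat.lt_or_ge a b with h | h
  · have := lam.betaF_lt h hb
    omega
  · have h' : b < a := by omega
    have := lam.betaF_lt h' ha
    omega

lemma card_betaSet (lam : NPartition) (N : ℕ) : (lam.betaSet N).card = N := by
  rw [betaSet, Finset.card_image_of_injOn (lam.betaF_injOn N), Finset.card_range]

lemma beadSet_eq_betaSet (lam : NPartition) (k : ℕ) :
    lam.beadSet k = lam.betaSet (lam.numParts + k) := by
  ext n
  simp only [beadSet, betaSet, Finset.mem_union, Finset.mem_range, Finset.mem_image,
    Finset.mem_range]
  constructor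
  · rintro (hn | ⟨i, hi, rfl⟩)
    · refine ⟨lam.numParts + k - 1 - n, by omega, ?_⟩
      have h0 : lam.parts (lam.numParts + k - 1 - n) = 0 :=
        (lam.parts_eq_zero_iff _).mpr (by omega)
      unfold betaF
      omega
    · refine ⟨i, by omega, ?_⟩
      unfold betaF
      omega
  · rintro ⟨i, hi, rfl⟩
    by_cases him : i < lam.numParts
    · right
      refine ⟨i, him, ?_⟩
      unfold betaF
      omega
    · left
      have h0 : lam.parts i = 0 := (lam.parts_eq_zero_iff i).mpr (le_of_not_gt him)
      unfold betaF
      omega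

lemma betaSet_compl (lam : NPartition) (N M : ℕ) (hN : lam.numParts ≤ N)
    (hM : lam.parts 0 ≤ M) :
    (lam.conj.betaSet M).image (fun y => N + M - 1 - y) =
      Finset.range (N + M) \ lam.betaSet N := by
  have hsub1 : lam.betaSet N ⊆ Finset.range (N + M) := by
    intro x hx
    simp only [betaSet, Finset.mem_image, Finset.mem_range] at hx ⊢
    obtain ⟨i, hi, rfl⟩ := hx
    have h1 : lam.parts i ≤ lam.parts 0 := lam.antitone (Nat.zero_le i)
    unfold betaF
    omega
  have hsub2 : (lam.conj.betaSet M).image (fun y => N + M - 1 - y) ⊆ Finset.range (N + M) := by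
    intro x hx
    simp only [betaSet, Finset.mem_image, Finset.mem_range] at hx ⊢
    obtain ⟨y, ⟨j, hj, rfl⟩, rfl⟩ := hx
    omega
  have hdisj : Disjoint ((lam.conj.betaSet M).image (fun y => N + M - 1 - y)) (lam.betaSet N) := by
    rw [Finset.disjoint_left]
    rintro x hx hx'
    simp only [betaSet, Finset.mem_image, Finset.mem_range] at hx hx'
    obtain ⟨y, ⟨j, hj, rfl⟩, heq⟩ := hx
    obtain ⟨i, hi, rfl⟩ := hx'
    have hB : lam.conj.parts j ≤ N := le_trans (lam.conj_parts_le j) hN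
    unfold betaF at heq
    rcases Nat.lt_or_ge j (lam.parts i) with hc | hc
    · have := (lam.conj_lt_iff i j).mpr hc
      omega
    · have := (lam.conj_lt_iff i j)
      have h2 : lam.conj.parts j ≤ i := by
        by_contra h3
        push_neg at h3
        exact absurd (this.mp h3) (not_lt.mpr hc)
      omega
  have hinj : ((lam.conj.betaSet M).image (fun y => N + M - 1 - y)).card = M := by
    rw [Finset.card_image_of_injOn, lam.conj.card_betaSet M]
    intro a ha b hb hab
    simp only [betaSet, Finset.coe_image, Set.mem_image, Finset.mem_coe, Finset.mem_image,
      Finset.mem_range] at ha hb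
    obtain ⟨i, hi, rfl⟩ := ha
    obtain ⟨j, hj, rfl⟩ := hb
    have h1 : lam.conj.parts i ≤ N := le_trans (lam.conj_parts_le i) hN
    have h2 : lam.conj.parts j ≤ N := le_trans (lam.conj_parts_le j) hN
    simp only at hab
    unfold betaF at hab ⊢
    omega
  apply Finset.eq_of_subset_of_card_le
  · intro x hx
    exact Finset.mem_sdiff.mpr ⟨hsub2 hx, fun h => (Finset.disjoint_left.mp hdisj hx) h⟩
  · rw [Finset.card_sdiff_of_subset hsub1, Finset.card_range, lam.card_betaSet N, hinj]
    omega


lemma betaSet_le (lam mu : NPartition) (N : ℕ)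
    (h : lam.betaSet N = mu.betaSet N) : ∀ i < N, mu.betaF N i ≤ lam.betaF N i := by
  intro i hiN
  by_contra hlt
  push_neg at hlt
  have hcard : ∀ (nu : NPartition), ((nu.betaSet N).filter (fun y => nu.betaF N i < y)).card = i := by
    intro nu
    have : (nu.betaSet N).filter (fun y => nu.betaF N i < y) =
        (Finset.range i).image (nu.betaF N) := by
      ext y
      simp only [Finset.mem_filter, betaSet, Finset.mem_image, Finset.mem_range]
      constructor
      · rintro ⟨⟨r, hr, rfl⟩, hgt⟩
        refine ⟨r, ?_, rfl⟩
        by_contra hri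
        push_neg at hri
        exact absurd hgt (not_lt.mpr (nu.betaF_le hri))
      · rintro ⟨r, hr, rfl⟩
        exact ⟨⟨r, by omega, rfl⟩, nu.betaF_lt hr hiN⟩
    rw [this, Finset.card_image_of_injOn, Finset.card_range]
    exact Set.InjOn.mono (by intro x hx; simp only [Finset.coe_range, Set.mem_Iio] at hx ⊢; omega)
      (nu.betaF_injOn N)
  have h1 := hcard lam
  have h2 := hcard mu
  rw [h] at h1
  have hmem : mu.betaF N i ∈ mu.betaSet N := by
    simp only [betaSet, Finset.mem_image, Finset.mem_range]
    exact ⟨i, hiN, rfl⟩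
  have hins : insert (mu.betaF N i) ((mu.betaSet N).filter (fun y => mu.betaF N i < y)) ⊆
      (mu.betaSet N).filter (fun y => lam.betaF N i < y) := by
    intro y hy
    rcases Finset.mem_insert.mp hy with rfl | hy'
    · exact Finset.mem_filter.mpr ⟨hmem, hlt⟩
    · have := Finset.mem_filter.mp hy'
      exact Finset.mem_filter.mpr ⟨this.1, by omega⟩
  have hcardins : (insert (mu.betaF N i) ((mu.betaSet N).filter (fun y => mu.betaF N i < y))).card
      = i + 1 := by
    rw [Finset.card_insert_of_notMem, h2]
    intro hc
    exact absurd (Finset.mem_filter.mp hc).2 (lt_irrefl _)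
  have := Finset.card_le_card hins
  omega

lemma betaSet_inj (lam mu : NPartition) (N : ℕ) (hlam : lam.numParts ≤ N)
    (hmu : mu.numParts ≤ N) (h : lam.betaSet N = mu.betaSet N) : lam = mu := by
  apply ext'
  intro i
  rcases Nat.lt_or_ge i N with hiN | hiN
  · have h1 := betaSet_le lam mu N h i hiN
    have h2 := betaSet_le mu lam N h.symm i hiN
    unfold betaF at h1 h2
    omega
  · rw [(lam.parts_eq_zero_iff i).mpr (le_trans hlam hiN),
      (mu.parts_eq_zero_iff i).mpr (le_trans hmu hiN)]

end NPartition

/-- Let `X` be a bead-set for `λ` normalized with respect to `s`, and `q`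
the least integer with `X ⊆ {0, …, qs - 1}`.  If the `s`-abacus of `X` exhibits both
horizontal anti-symmetry and vertical symmetry, then `λ` is self-conjugate. -/
theorem both_symmetries_selfConjugate (s : ℕ) (lam : NPartition)
    (X : Finset ℕ) (q : ℕ)
    (hX : NPartition.IsNormalizedBeadSet s lam X)
    (hq : IsLeast {q' : ℕ | ∀ x ∈ X, x < q' * s} q)
    (hHA : ∀ i < s, ∀ j < q, (i + j * s ∈ X ↔ i + (q - 1 - j) * s ∉ X))
    (hVS : ∀ i < s, ∀ j < q, (i + j * s ∈ X ↔ (s - 1 - i) + j * s ∈ X)) :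
    lam = lam.conj := by
  classical
  obtain ⟨k, hXk, -, -⟩ := hX
  obtain ⟨hqmem, -⟩ := hq
  simp only [Set.mem_setOf_eq] at hqmem
  rcases X.eq_empty_or_nonempty with hXe | hXne
  · -- X empty: lam is the empty partition
    have hm : lam.numParts = 0 := by
      by_contra hm
      have h0 : (0 : ℕ) ∈ Finset.range lam.numParts :=
        Finset.mem_range.mpr (Nat.pos_of_ne_zero hm)
      have hmem : (lam.parts 0 + (lam.numParts - (0 + 1)) + k) ∈ lam.beadSet k :=
        Finset.mem_union_right _ (Finset.mem_image_of_mem _ h0)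
      rw [← hXk, hXe] at hmem
      exact absurd hmem (Finset.notMem_empty _)
    apply NPartition.ext'
    intro i
    have h1 : lam.parts i = 0 := (lam.parts_eq_zero_iff i).mpr (by omega)
    have h2 : lam.conj.parts i = 0 := by
      rw [NPartition.conj_parts_def, hm]
      simp
    rw [h1, h2]
  · have hs : 0 < s := by
      rcases Nat.eq_zero_or_pos s with rfl | h
      · obtain ⟨x, hx⟩ := hXne
        have := hqmem x hx
        omega
      · exact h
    set N := lam.numParts + k with hNdef
    have hXbeta : X = lam.betaSet N := hXk.trans (lam.beadSet_eq_betaSet k)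
    have hcard : X.card = N := by rw [hXbeta, lam.card_betaSet N]
    have hN0 : 0 < N := by
      rw [← hcard]
      exact Finset.card_pos.mpr hXne
    set Q := q * s with hQdef
    -- the reversal property
    have hR : ∀ n < Q, (n ∈ X ↔ Q - 1 - n ∉ X) := by
      intro n hnQ
      have hi : n % s < s := Nat.mod_lt _ hs
      have hj : n / s < q := by
        rw [Nat.div_lt_iff_lt_mul hs]
        omega
      have hn : n % s + n / s * s = n := Nat.mod_add_div' n s
      have e1 : (s - 1 - n % s) + (q - 1 - n / s) * s = Q - 1 - n := by
        have h2 : ((q - 1 - n / s) + n / s + 1) * s = q * s := by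
          congr 1
          omega
        have h3 : ((q - 1 - n / s) + n / s + 1) * s
            = (q - 1 - n / s) * s + n / s * s + s := by ring
        omega
      have t1 := hVS (n % s) hi (n / s) hj
      have t2 := hHA (s - 1 - n % s) (by omega) (n / s) hj
      rw [hn] at t1
      rw [e1] at t2
      exact t1.trans t2
    have hXsub : X ⊆ Finset.range Q := fun x hx => Finset.mem_range.mpr (hqmem x hx)
    have hQ0 : 0 < Q := by
      obtain ⟨x, hx⟩ := hXne
      have := hqmem x hx
      omega
    -- reverse map
    have hrevcard : ∀ s' : Finset ℕ, s' ⊆ Finset.range Q →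
        (s'.image (fun y => Q - 1 - y)).card = s'.card := by
      intro s' hs'
      apply Finset.card_image_of_injOn
      intro a ha b hb hab
      have ha' := Finset.mem_range.mp (hs' ha)
      have hb' := Finset.mem_range.mp (hs' hb)
      have hab' : Q - 1 - a = Q - 1 - b := hab
      omega
    have hA : X.image (fun y => Q - 1 - y) ⊆ Finset.range Q \ X := by
      intro y hy
      obtain ⟨x, hx, rfl⟩ := Finset.mem_image.mp hy
      have hxQ := hqmem x hx
      refine Finset.mem_sdiff.mpr ⟨Finset.mem_range.mpr (by omega), ?_⟩
      exact (hR x hxQ).mp hx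
    have hB : (Finset.range Q \ X).image (fun y => Q - 1 - y) ⊆ X := by
      intro y hy
      obtain ⟨x, hx, rfl⟩ := Finset.mem_image.mp hy
      obtain ⟨hx1, hx2⟩ := Finset.mem_sdiff.mp hx
      have hxQ := Finset.mem_range.mp hx1
      by_contra hc
      exact hx2 ((hR x hxQ).mpr hc)
    have hCcard : (Finset.range Q \ X).card = Q - N := by
      rw [Finset.card_sdiff_of_subset hXsub, Finset.card_range, hcard]
    have hNle : N ≤ Q := by
      have := Finset.card_le_card hXsub
      rw [hcard, Finset.card_range] at this
      exact this
    have hle1 : N ≤ Q - N := by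
      have := Finset.card_le_card hA
      rw [hrevcard X hXsub, hcard, hCcard] at this
      exact this
    have hle2 : Q - N ≤ N := by
      have := Finset.card_le_card hB
      rw [hrevcard _ (Finset.sdiff_subset), hCcard, hcard] at this
      exact this
    have hQ2N : Q = N + N := by omega
    -- parts 0 ≤ N
    have htop : lam.betaF N 0 ∈ X := by
      rw [hXbeta]
      exact Finset.mem_image_of_mem _ (Finset.mem_range.mpr hN0)
    have hM : lam.parts 0 ≤ N := by
      have := hqmem _ htop
      unfold NPartition.betaF at this
      omega
    -- X.image rev = range Q \ X
    have hXrev : X.image (fun y => Q - 1 - y) = Finset.range Q \ X := by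
      apply Finset.eq_of_subset_of_card_le hA
      rw [hrevcard X hXsub, hcard, hCcard]
      omega
    have hcompl := lam.betaSet_compl N N (by omega) hM
    rw [← hQ2N, ← hXbeta] at hcompl
    -- conj.betaSet N ⊆ range Q
    have hconjsub : lam.conj.betaSet N ⊆ Finset.range Q := by
      intro y hy
      simp only [NPartition.betaSet, Finset.mem_image, Finset.mem_range] at hy ⊢
      obtain ⟨j, hj, rfl⟩ := hy
      have h1 : lam.conj.parts j ≤ lam.numParts := lam.conj_parts_le j
      unfold NPartition.betaF
      omega
    -- cancel the reversal
    have himeq : lam.conj.betaSet N = X := by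
      have heq : (lam.conj.betaSet N).image (fun y => Q - 1 - y)
          = X.image (fun y => Q - 1 - y) := hcompl.trans hXrev.symm
      ext x
      constructor
      · intro hx
        have : Q - 1 - x ∈ X.image (fun y => Q - 1 - y) := by
          rw [← heq]
          exact Finset.mem_image_of_mem _ hx
        obtain ⟨z, hz, hzx⟩ := Finset.mem_image.mp this
        have hxQ := Finset.mem_range.mp (hconjsub hx)
        have hzQ := Finset.mem_range.mp (hXsub hz)
        have : z = x := by omega
        rwa [← this]
      · intro hx
        have : Q - 1 - x ∈ (lam.conj.betaSet N).image (fun y => Q - 1 - y) := by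
          rw [heq]
          exact Finset.mem_image_of_mem _ hx
        obtain ⟨z, hz, hzx⟩ := Finset.mem_image.mp this
        have hxQ := Finset.mem_range.mp (hXsub hx)
        have hzQ := Finset.mem_range.mp (hconjsub hz)
        have : z = x := by omega
        rwa [← this]
    have hfin : lam.betaSet N = lam.conj.betaSet N := by
      rw [← hXbeta, himeq]
    exact NPartition.betaSet_inj lam lam.conj N (by omega)
      (le_trans lam.numParts_conj_le (by omega)) hfin
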